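/- arXiv:1509.03606 — 5 statements merged into one kernel-verified Lean document; each statement's English description precedes it below -/
import Mathlib

section
/- Suppose ε > 0, R > 0 and β ∈ ℂ. Let w, ψ : ℝ² → ℂ be smooth functions, not both identically zero on Ω, satisfying on Ω the system (1/R)·Δw + R·ψ_θ = β·(w − ε·Δw) and (1/R)·Δ²ψ − ε·R·Δ(w_θ) = β·(Δψ − ε·Δ²ψ), together with the boundary conditions w = 0, ψ = 0 and ∇ψ = 0 on ∂Ω. Then β is real (Im β = 0). -/
open MeasureTheory Complex

noncomputable section

/-- Partial derivative with respect to the first (x) variable. -/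
def pdx (f : ℝ × ℝ → ℂ) : ℝ × ℝ → ℂ := fun p => deriv (fun x => f (x, p.2)) p.1

/-- Partial derivative with respect to the second (y) variable. -/
def pdy (f : ℝ × ℝ → ℂ) : ℝ × ℝ → ℂ := fun p => deriv (fun y => f (p.1, y)) p.2

/-- The Laplacian Δf = f_xx + f_yy. -/
def lap (f : ℝ × ℝ → ℂ) : ℝ × ℝ → ℂ := fun p => pdx (pdx f) p + pdy (pdy f) p

/-- The azimuthal derivative f_θ = x f_y − y f_x. -/
def azim (f : ℝ × ℝ → ℂ) : ℝ × ℝ → ℂ :=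
  fun p => (p.1 : ℂ) * pdy f p - (p.2 : ℂ) * pdx f p

/-- The open unit disk Ω. -/
def disk : Set (ℝ × ℝ) := {p | p.1 ^ 2 + p.2 ^ 2 < 1}

/-- The unit circle ∂Ω. -/
def bdry : Set (ℝ × ℝ) := {p | p.1 ^ 2 + p.2 ^ 2 = 1}

/-!
Pair the first equation with `Δw` and the second with `ψ`, and integrate by parts on the disk
using the boundary conditions; since `Δ` commutes with `∂_θ` and `∂_θ` is skew-adjoint, this gives
with `X = ⟨ψ_θ, Δw⟩`
  `‖Δw‖² / R + R X = -β (‖∇w‖² + ε ‖Δw‖²)`,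
  `‖Δψ‖² / R + ε R conj X = -β (‖∇ψ‖² + ε ‖Δψ‖²)`.
The coupling term cancels from the imaginary part of `ε` times the first identity plus the second,
leaving `Im β (‖∇ψ‖² + ε ‖Δψ‖² + ε ‖∇w‖² + ε² ‖Δw‖²) = 0`. If `Im β ≠ 0`, then `∇w` and `∇ψ`
vanish on `Ω`, so `w` and `ψ` are constant there, and the boundary conditions force them to be `0`.
-/

open Set
open scoped ContDiff ComplexConjugate

section Calculus

variable {f g : ℝ × ℝ → ℂ} {p : ℝ × ℝ}

lemma pdx_eq_fderiv (hf : DifferentiableAt ℝ f p) : pdx f p = fderiv ℝ f p (1, 0) :=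
  (hf.hasFDerivAt.comp_hasDerivAt_of_eq p.1
    ((hasDerivAt_id _).prodMk (hasDerivAt_const _ _)) rfl).deriv

lemma pdy_eq_fderiv (hf : DifferentiableAt ℝ f p) : pdy f p = fderiv ℝ f p (0, 1) :=
  (hf.hasFDerivAt.comp_hasDerivAt_of_eq p.2
    ((hasDerivAt_const _ _).prodMk (hasDerivAt_id _)) rfl).deriv

lemma hasDerivAt_pdx (hf : DifferentiableAt ℝ f p) :
    HasDerivAt (fun x => f (x, p.2)) (pdx f p) p.1 :=
  (hf.comp p.1 (differentiableAt_id.prodMk (differentiableAt_const p.2))).hasDerivAt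

lemma hasDerivAt_pdy (hf : DifferentiableAt ℝ f p) :
    HasDerivAt (fun y => f (p.1, y)) (pdy f p) p.2 :=
  (hf.comp p.2 ((differentiableAt_const p.1).prodMk differentiableAt_id)).hasDerivAt

lemma pdx_add (hf : DifferentiableAt ℝ f p) (hg : DifferentiableAt ℝ g p) :
    pdx (f + g) p = pdx f p + pdx g p :=
  ((hasDerivAt_pdx hf).add (hasDerivAt_pdx hg)).deriv

lemma pdy_add (hf : DifferentiableAt ℝ f p) (hg : DifferentiableAt ℝ g p) :
    pdy (f + g) p = pdy f p + pdy g p :=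
  ((hasDerivAt_pdy hf).add (hasDerivAt_pdy hg)).deriv

lemma pdx_sub (hf : DifferentiableAt ℝ f p) (hg : DifferentiableAt ℝ g p) :
    pdx (f - g) p = pdx f p - pdx g p :=
  ((hasDerivAt_pdx hf).sub (hasDerivAt_pdx hg)).deriv

lemma pdy_sub (hf : DifferentiableAt ℝ f p) (hg : DifferentiableAt ℝ g p) :
    pdy (f - g) p = pdy f p - pdy g p :=
  ((hasDerivAt_pdy hf).sub (hasDerivAt_pdy hg)).deriv

lemma pdx_mul (hf : DifferentiableAt ℝ f p) (hg : DifferentiableAt ℝ g p) :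
    pdx (f * g) p = pdx f p * g p + f p * pdx g p :=
  ((hasDerivAt_pdx hf).mul (hasDerivAt_pdx hg)).deriv

lemma pdy_mul (hf : DifferentiableAt ℝ f p) (hg : DifferentiableAt ℝ g p) :
    pdy (f * g) p = pdy f p * g p + f p * pdy g p :=
  ((hasDerivAt_pdy hf).mul (hasDerivAt_pdy hg)).deriv

lemma pdx_star : pdx (star f) p = conj (pdx f p) := deriv.star

lemma pdy_star : pdy (star f) p = conj (pdy f p) := deriv.star

lemma pdx_ofReal_fst : pdx (fun q : ℝ × ℝ => (q.1 : ℂ)) p = 1 := by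
  show deriv (fun x : ℝ => (x : ℂ)) p.1 = 1
  simpa using (hasDerivAt_id p.1).ofReal_comp.deriv

lemma pdx_ofReal_snd : pdx (fun q : ℝ × ℝ => (q.2 : ℂ)) p = 0 := by
  simp [pdx]

lemma pdy_ofReal_fst : pdy (fun q : ℝ × ℝ => (q.1 : ℂ)) p = 0 := by
  simp [pdy]

lemma pdy_ofReal_snd : pdy (fun q : ℝ × ℝ => (q.2 : ℂ)) p = 1 := by
  show deriv (fun y : ℝ => (y : ℂ)) p.2 = 1
  simpa using (hasDerivAt_id p.2).ofReal_comp.deriv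

lemma azim_add (hf : DifferentiableAt ℝ f p) (hg : DifferentiableAt ℝ g p) :
    azim (f + g) p = azim f p + azim g p := by
  simp only [azim, pdx_add hf hg, pdy_add hf hg]
  ring

variable {n : WithTop ℕ∞}

lemma ContDiff.pdx (hf : ContDiff ℝ (n + 1) f) : ContDiff ℝ n (pdx f) := by
  have hd : Differentiable ℝ f := hf.differentiable (by simp)
  rw [show _root_.pdx f = fun p => fderiv ℝ f p (1, 0) from funext fun p => pdx_eq_fderiv (hd p)]
  exact (hf.fderiv_right le_rfl).clm_apply contDiff_const

lemma ContDiff.pdy (hf : ContDiff ℝ (n + 1) f) : ContDiff ℝ n (pdy f) := by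
  have hd : Differentiable ℝ f := hf.differentiable (by simp)
  rw [show _root_.pdy f = fun p => fderiv ℝ f p (0, 1) from funext fun p => pdy_eq_fderiv (hd p)]
  exact (hf.fderiv_right le_rfl).clm_apply contDiff_const

lemma ContDiff.lap (hf : ContDiff ℝ (n + 2) f) : ContDiff ℝ n (lap f) := by
  rw [show n + 2 = n + 1 + 1 by rw [add_assoc, one_add_one_eq_two]] at hf
  exact hf.pdx.pdx.add hf.pdy.pdy

lemma ContDiff.azim (hf : ContDiff ℝ (n + 1) f) : ContDiff ℝ n (azim f) := by
  have hx : ContDiff ℝ n (fun q : ℝ × ℝ => (q.1 : ℂ)) := ofRealCLM.contDiff.comp contDiff_fst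
  have hy : ContDiff ℝ n (fun q : ℝ × ℝ => (q.2 : ℂ)) := ofRealCLM.contDiff.comp contDiff_snd
  exact (hx.mul hf.pdy).sub (hy.mul hf.pdx)

lemma pdx_pdy_comm (hf : ContDiff ℝ 2 f) : pdx (pdy f) = pdy (pdx f) := by
  ext p
  have hd : Differentiable ℝ f := hf.differentiable (by simp)
  have hdd : DifferentiableAt ℝ (fderiv ℝ f) p :=
    (hf.fderiv_right (m := 1) (by norm_num)).differentiable (by simp) p
  rw [pdx_eq_fderiv ((hf.pdy (n := 1)).differentiable one_ne_zero p),
    pdy_eq_fderiv ((hf.pdx (n := 1)).differentiable one_ne_zero p),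
    show _root_.pdy f = fun q => fderiv ℝ f q (0, 1) from funext fun q => pdy_eq_fderiv (hd q),
    show _root_.pdx f = fun q => fderiv ℝ f q (1, 0) from funext fun q => pdx_eq_fderiv (hd q),
    fderiv_clm_apply hdd (differentiableAt_const _),
    fderiv_clm_apply hdd (differentiableAt_const _)]
  simpa using (hf.contDiffAt.isSymmSndFDerivAt (by simp)) (1, 0) (0, 1)

lemma pdx_azim (hf : ContDiff ℝ 2 f) (p : ℝ × ℝ) :
    pdx (azim f) p = pdy f p + azim (pdx f) p := by
  have hx : DifferentiableAt ℝ (pdx f) p := (hf.pdx (n := 1)).differentiable one_ne_zero p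
  have hy : DifferentiableAt ℝ (pdy f) p := (hf.pdy (n := 1)).differentiable one_ne_zero p
  rw [show azim f = (fun q => (q.1 : ℂ)) * pdy f - (fun q => (q.2 : ℂ)) * pdx f from rfl,
    pdx_sub (by fun_prop) (by fun_prop), pdx_mul (by fun_prop) hy, pdx_mul (by fun_prop) hx,
    pdx_ofReal_fst, pdx_ofReal_snd, pdx_pdy_comm hf]
  simp only [azim]
  ring

lemma pdy_azim (hf : ContDiff ℝ 2 f) (p : ℝ × ℝ) :
    pdy (azim f) p = azim (pdy f) p - pdx f p := by
  have hx : DifferentiableAt ℝ (pdx f) p := (hf.pdx (n := 1)).differentiable one_ne_zero p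
  have hy : DifferentiableAt ℝ (pdy f) p := (hf.pdy (n := 1)).differentiable one_ne_zero p
  rw [show azim f = (fun q => (q.1 : ℂ)) * pdy f - (fun q => (q.2 : ℂ)) * pdx f from rfl,
    pdy_sub (by fun_prop) (by fun_prop), pdy_mul (by fun_prop) hy, pdy_mul (by fun_prop) hx,
    pdy_ofReal_fst, pdy_ofReal_snd, ← pdx_pdy_comm hf]
  simp only [azim]
  ring

lemma lap_azim (hf : ContDiff ℝ 3 f) : lap (azim f) = azim (lap f) := by
  ext p
  have hf2 : ContDiff ℝ 2 f := hf.of_le (by norm_num)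
  have hx : ContDiff ℝ 2 (pdx f) := hf.pdx
  have hy : ContDiff ℝ 2 (pdy f) := hf.pdy
  simp only [lap]
  rw [show pdx (azim f) = pdy f + azim (pdx f) from funext (pdx_azim hf2),
    show pdy (azim f) = azim (pdy f) - pdx f from funext (pdy_azim hf2),
    pdx_add ((hf2.pdy (n := 1)).differentiable one_ne_zero p)
      ((hx.azim (n := 1)).differentiable one_ne_zero p),
    pdy_sub ((hy.azim (n := 1)).differentiable one_ne_zero p)
      ((hf2.pdx (n := 1)).differentiable one_ne_zero p),
    pdx_azim hx, pdy_azim hy, pdx_pdy_comm hf2,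
    show lap f = pdx (pdx f) + pdy (pdy f) from rfl,
    azim_add ((hx.pdx (n := 1)).differentiable one_ne_zero p)
      ((hy.pdy (n := 1)).differentiable one_ne_zero p)]
  ring

end Calculus

section Integration

variable {h : ℝ × ℝ → ℂ}

lemma isOpen_disk : IsOpen disk :=
  isOpen_lt (by fun_prop) continuous_const

lemma mk_mem_disk_iff {x y : ℝ} : (x, y) ∈ disk ↔ |x| < √(1 - y ^ 2) := by
  rw [Real.lt_sqrt (abs_nonneg x), sq_abs, lt_sub_iff_add_lt]
  rfl

lemma disk_subset_Icc_prod_Icc : disk ⊆ Icc (-1) 1 ×ˢ Icc (-1) 1 := by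
  rintro ⟨x, y⟩ (hxy : x ^ 2 + y ^ 2 < 1)
  refine ⟨⟨?_, ?_⟩, ?_, ?_⟩ <;> nlinarith [sq_nonneg x, sq_nonneg y]

lemma Continuous.integrableOn_disk {E : Type*} [NormedAddCommGroup E] {f : ℝ × ℝ → E}
    (hf : Continuous f) : IntegrableOn f disk :=
  (hf.continuousOn.integrableOn_compact (isCompact_Icc.prod isCompact_Icc)).mono_set
    disk_subset_Icc_prod_Icc

-- Fubini: on each horizontal chord of `Ω` the integral of `∂h/∂x` is the difference of the values
-- of `h` at the two ends of the chord, which lie on `∂Ω`.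
lemma integral_pdx_eq_zero (hh : ContDiff ℝ 1 h) (h0 : ∀ p ∈ bdry, h p = 0) :
    ∫ p in disk, pdx h p = 0 := by
  have hc : Continuous (pdx h) := (hh.pdx (n := 0)).continuous
  have chord : ∀ y, ∫ x, disk.indicator (pdx h) (x, y) = 0 := by
    intro y
    set a := √(1 - y ^ 2) with ha_def
    have hslice : (fun x => disk.indicator (pdx h) (x, y)) =
        (Ioo (-a) a).indicator (fun x => pdx h (x, y)) := by
      ext x
      simp only [indicator, mk_mem_disk_iff, ← ha_def, mem_Ioo, ← abs_lt]
    rw [hslice, integral_indicator measurableSet_Ioo, ← integral_Ioc_eq_integral_Ioo,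
      ← intervalIntegral.integral_of_le (by simp [a])]
    change ∫ x in -a..a, deriv (fun x => h (x, y)) x = 0
    have hd : Differentiable ℝ (fun x => h (x, y)) :=
      (hh.differentiable one_ne_zero).comp (differentiable_id.prodMk (differentiable_const y))
    rw [intervalIntegral.integral_deriv_eq_sub (fun x _ => hd x)
        ((hc.comp (continuous_id.prodMk continuous_const)).intervalIntegrable _ _)]
    rcases lt_or_ge (y ^ 2) 1 with hy | hy
    · have ha : a ^ 2 = 1 - y ^ 2 := Real.sq_sqrt (by linarith)
      rw [h0 (a, y) (by simp [bdry, ha]), h0 (-a, y) (by simp [bdry, ha]), sub_zero]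
    · simp [a, Real.sqrt_eq_zero'.2 (sub_nonpos.2 hy)]
  rw [← integral_indicator isOpen_disk.measurableSet, Measure.volume_eq_prod,
    integral_prod_symm _ ((integrable_indicator_iff isOpen_disk.measurableSet).2
      hc.integrableOn_disk)]
  simp [chord]

lemma integral_pdy_eq_zero (hh : ContDiff ℝ 1 h) (h0 : ∀ p ∈ bdry, h p = 0) :
    ∫ p in disk, pdy h p = 0 := by
  have hswap : Prod.swap ⁻¹' disk = disk := by
    ext
    simp [disk, add_comm]
  have := (Measure.measurePreserving_swap (μ := volume) (ν := volume)).setIntegral_preimage_emb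
    MeasurableEquiv.prodComm.measurableEmbedding (pdx (h ∘ Prod.swap)) disk
  rw [hswap] at this
  exact this.trans (integral_pdx_eq_zero (hh.comp (contDiff_snd.prodMk contDiff_fst))
    fun p hp => h0 p.swap (by simpa [bdry, add_comm] using hp))

lemma azim_eq_pdy_sub_pdx (hh : Differentiable ℝ h) (p : ℝ × ℝ) :
    azim h p = pdy ((fun q => (q.1 : ℂ)) * h) p - pdx ((fun q => (q.2 : ℂ)) * h) p := by
  rw [pdy_mul (by fun_prop) (hh p), pdx_mul (by fun_prop) (hh p), pdy_ofReal_fst, pdx_ofReal_snd]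
  simp [azim]

lemma integral_azim_eq_zero (hh : ContDiff ℝ 1 h) (h0 : ∀ p ∈ bdry, h p = 0) :
    ∫ p in disk, azim h p = 0 := by
  have hx : ContDiff ℝ 1 ((fun q : ℝ × ℝ => (q.1 : ℂ)) * h) :=
    (ofRealCLM.contDiff.comp contDiff_fst).mul hh
  have hy : ContDiff ℝ 1 ((fun q : ℝ × ℝ => (q.2 : ℂ)) * h) :=
    (ofRealCLM.contDiff.comp contDiff_snd).mul hh
  have hvanish (c : ℝ × ℝ → ℂ) : ∀ p ∈ bdry, (c * h) p = 0 := fun p hp => by simp [h0 p hp]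
  simp_rw [azim_eq_pdy_sub_pdx (hh.differentiable one_ne_zero)]
  rw [integral_sub (hx.pdy (n := 0)).continuous.integrableOn_disk
    (hy.pdx (n := 0)).continuous.integrableOn_disk, integral_pdy_eq_zero hx (hvanish _),
    integral_pdx_eq_zero hy (hvanish _), sub_zero]

end Integration

section InnerProduct

def diskInner (f g : ℝ × ℝ → ℂ) : ℂ := ∫ p in disk, f p * conj (g p)

def diskNormSq (f : ℝ × ℝ → ℂ) : ℝ := ∫ p in disk, ‖f p‖ ^ 2

def diskGradNormSq (f : ℝ × ℝ → ℂ) : ℝ := diskNormSq (pdx f) + diskNormSq (pdy f)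

variable {f f₁ f₂ g : ℝ × ℝ → ℂ}

lemma diskInner_self (f : ℝ × ℝ → ℂ) : diskInner f f = diskNormSq f := by
  simp only [diskInner, diskNormSq, mul_conj', ← integral_complex_ofReal, ofReal_pow]

lemma conj_diskInner (f g : ℝ × ℝ → ℂ) : conj (diskInner f g) = diskInner g f := by
  simp only [diskInner, ← integral_conj, map_mul, conj_conj, mul_comm]

lemma diskNormSq_nonneg (f : ℝ × ℝ → ℂ) : 0 ≤ diskNormSq f :=
  setIntegral_nonneg isOpen_disk.measurableSet fun _ _ => sq_nonneg _

lemma diskGradNormSq_nonneg (f : ℝ × ℝ → ℂ) : 0 ≤ diskGradNormSq f :=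
  add_nonneg (diskNormSq_nonneg _) (diskNormSq_nonneg _)

lemma diskInner_congr_left (h : EqOn f₁ f₂ disk) (g : ℝ × ℝ → ℂ) :
    diskInner f₁ g = diskInner f₂ g :=
  setIntegral_congr_fun isOpen_disk.measurableSet fun p hp => by simp [h hp]

lemma diskInner_smul_left (c : ℂ) (f g : ℝ × ℝ → ℂ) :
    diskInner (c • f) g = c * diskInner f g := by
  simp only [diskInner, Pi.smul_apply, smul_eq_mul, mul_assoc, integral_const_mul]

lemma diskInner_add_left (hf₁ : Continuous f₁) (hf₂ : Continuous f₂) (hg : Continuous g) :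
    diskInner (f₁ + f₂) g = diskInner f₁ g + diskInner f₂ g := by
  simp only [diskInner, Pi.add_apply, add_mul]
  exact integral_add (by fun_prop : Continuous _).integrableOn_disk
    (by fun_prop : Continuous _).integrableOn_disk

lemma diskInner_sub_left (hf₁ : Continuous f₁) (hf₂ : Continuous f₂) (hg : Continuous g) :
    diskInner (f₁ - f₂) g = diskInner f₁ g - diskInner f₂ g := by
  simp only [diskInner, Pi.sub_apply, sub_mul]
  exact integral_sub (by fun_prop : Continuous _).integrableOn_disk
    (by fun_prop : Continuous _).integrableOn_disk

lemma diskInner_add_right (hf : Continuous f) (hg₁ : Continuous f₁) (hg₂ : Continuous f₂) :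
    diskInner f (f₁ + f₂) = diskInner f f₁ + diskInner f f₂ := by
  rw [← conj_diskInner, diskInner_add_left hg₁ hg₂ hf, map_add, conj_diskInner, conj_diskInner]

lemma eqOn_zero_of_diskNormSq_eq_zero (hf : Continuous f) (h : diskNormSq f = 0) :
    EqOn f 0 disk := by
  have hae : (fun p => ‖f p‖ ^ 2) =ᵐ[volume.restrict disk] 0 :=
    (setIntegral_eq_zero_iff_of_nonneg_ae (.of_forall fun _ => sq_nonneg _)
      (by fun_prop : Continuous _).integrableOn_disk).1 h
  have hsq : EqOn (fun p => ‖f p‖ ^ 2) 0 disk :=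
    Measure.eqOn_of_ae_eq hae (by fun_prop) continuousOn_const
      (isOpen_disk.interior_eq.symm ▸ subset_closure)
  exact fun p hp => by simpa using hsq hp

end InnerProduct

section Green

variable {f g : ℝ × ℝ → ℂ}

lemma ContDiff.star {n : WithTop ℕ∞} (hf : ContDiff ℝ n f) : ContDiff ℝ n (star f) :=
  conjCLE.contDiff.comp hf

lemma diskInner_eq_neg_of_leibniz {D : (ℝ × ℝ → ℂ) → ℝ × ℝ → ℂ} (hf : Continuous f)
    (hg : Continuous g) (hDf : Continuous (D f)) (hDg : Continuous (D g))
    (hleib : ∀ p, D (f * star g) p = D f p * conj (g p) + f p * conj (D g p))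
    (h0 : ∫ p in disk, D (f * star g) p = 0) :
    diskInner (D f) g = -diskInner f (D g) := by
  simp only [hleib] at h0
  rw [integral_add (by fun_prop : Continuous _).integrableOn_disk
    (by fun_prop : Continuous _).integrableOn_disk] at h0
  exact eq_neg_of_add_eq_zero_left h0

lemma diskInner_pdx_left (hf : ContDiff ℝ 1 f) (hg : ContDiff ℝ 1 g)
    (hg0 : ∀ p ∈ bdry, g p = 0) : diskInner (pdx f) g = -diskInner f (pdx g) :=
  diskInner_eq_neg_of_leibniz hf.continuous hg.continuous (hf.pdx (n := 0)).continuous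
    (hg.pdx (n := 0)).continuous
    (fun p => by
      rw [pdx_mul (hf.differentiable one_ne_zero p) (hg.star.differentiable one_ne_zero p),
        pdx_star]
      rfl)
    (integral_pdx_eq_zero (hf.mul hg.star) fun p hp => by simp [hg0 p hp])

lemma diskInner_pdy_left (hf : ContDiff ℝ 1 f) (hg : ContDiff ℝ 1 g)
    (hg0 : ∀ p ∈ bdry, g p = 0) : diskInner (pdy f) g = -diskInner f (pdy g) :=
  diskInner_eq_neg_of_leibniz hf.continuous hg.continuous (hf.pdy (n := 0)).continuous
    (hg.pdy (n := 0)).continuous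
    (fun p => by
      rw [pdy_mul (hf.differentiable one_ne_zero p) (hg.star.differentiable one_ne_zero p),
        pdy_star]
      rfl)
    (integral_pdy_eq_zero (hf.mul hg.star) fun p hp => by simp [hg0 p hp])

lemma diskInner_azim_left (hf : ContDiff ℝ 1 f) (hg : ContDiff ℝ 1 g)
    (hg0 : ∀ p ∈ bdry, g p = 0) : diskInner (azim f) g = -diskInner f (azim g) :=
  diskInner_eq_neg_of_leibniz hf.continuous hg.continuous (hf.azim (n := 0)).continuous
    (hg.azim (n := 0)).continuous
    (fun p => by
      have hf' := hf.differentiable one_ne_zero p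
      have hg' := hg.star.differentiable one_ne_zero p
      simp only [azim, pdx_mul hf' hg', pdy_mul hf' hg', pdx_star, pdy_star, Pi.star_apply,
        Complex.star_def, map_sub, map_mul, conj_ofReal]
      ring)
    (integral_azim_eq_zero (hf.mul hg.star) fun p hp => by simp [hg0 p hp])

lemma diskInner_lap_left (hf : ContDiff ℝ 2 f) (hg : ContDiff ℝ 1 g)
    (hg0 : ∀ p ∈ bdry, g p = 0) :
    diskInner (lap f) g = -(diskInner (pdx f) (pdx g) + diskInner (pdy f) (pdy g)) := by
  have hx : ContDiff ℝ 1 (pdx f) := hf.pdx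
  have hy : ContDiff ℝ 1 (pdy f) := hf.pdy
  rw [show lap f = pdx (pdx f) + pdy (pdy f) from rfl,
    diskInner_add_left (hx.pdx (n := 0)).continuous (hy.pdy (n := 0)).continuous hg.continuous,
    diskInner_pdx_left hx hg hg0, diskInner_pdy_left hy hg hg0]
  ring

lemma diskInner_lap_self (hf : ContDiff ℝ 2 f) (hf0 : ∀ p ∈ bdry, f p = 0) :
    diskInner (lap f) f = -(diskGradNormSq f : ℂ) := by
  rw [diskInner_lap_left hf (hf.of_le (by norm_num)) hf0, diskInner_self, diskInner_self,
    diskGradNormSq, ofReal_add]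

lemma diskInner_lap_symm (hf : ContDiff ℝ 2 f) (hg : ContDiff ℝ 2 g)
    (hg0 : ∀ p ∈ bdry, g p = 0) (hgx : ∀ p ∈ bdry, pdx g p = 0)
    (hgy : ∀ p ∈ bdry, pdy g p = 0) : diskInner (lap f) g = diskInner f (lap g) := by
  have hf1 : ContDiff ℝ 1 f := hf.of_le (by norm_num)
  have hx : ContDiff ℝ 1 (pdx g) := hg.pdx
  have hy : ContDiff ℝ 1 (pdy g) := hg.pdy
  rw [diskInner_lap_left hf (hg.of_le (by norm_num)) hg0, diskInner_pdx_left hf1 hx hgx,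
    diskInner_pdy_left hf1 hy hgy, show lap g = pdx (pdx g) + pdy (pdy g) from rfl,
    diskInner_add_right hf1.continuous (hx.pdx (n := 0)).continuous (hy.pdy (n := 0)).continuous]
  ring

end Green

section Vanishing

variable {f : ℝ × ℝ → ℂ}

lemma convex_disk : Convex ℝ disk := by
  have := ((even_two.convexOn_pow (𝕜 := ℝ)).comp_linearMap (LinearMap.fst ℝ ℝ ℝ)).add
    ((even_two.convexOn_pow (𝕜 := ℝ)).comp_linearMap (LinearMap.snd ℝ ℝ ℝ)) |>.convex_lt 1
  simpa [disk] using this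

lemma zero_mem_disk : (0 : ℝ × ℝ) ∈ disk := by
  simp [disk]

lemma one_zero_mem_closure_disk : ((1 : ℝ), (0 : ℝ)) ∈ closure disk := by
  have hseg : (fun t : ℝ => (t, (0 : ℝ))) '' Ioo (-1) 1 ⊆ disk := by
    rintro _ ⟨t, ht, rfl⟩
    simpa [disk, ← abs_lt] using ht
  refine closure_mono hseg (image_closure_subset_closure_image (by fun_prop) ⟨1, ?_, rfl⟩)
  rw [closure_Ioo (by norm_num)]
  norm_num

lemma fderiv_eq_zero_of_pdx_pdy {p : ℝ × ℝ} (hf : DifferentiableAt ℝ f p)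
    (hx : pdx f p = 0) (hy : pdy f p = 0) : fderiv ℝ f p = 0 := by
  rw [pdx_eq_fderiv hf] at hx
  rw [pdy_eq_fderiv hf] at hy
  exact ContinuousLinearMap.prod_ext (ContinuousLinearMap.ext_ring (by simpa using hx))
    (ContinuousLinearMap.ext_ring (by simpa using hy))

lemma eqOn_zero_of_diskGradNormSq_eq_zero (hf : ContDiff ℝ 1 f) (hf0 : ∀ p ∈ bdry, f p = 0)
    (h : diskGradNormSq f = 0) : EqOn f 0 disk := by
  have hsum : diskNormSq (pdx f) + diskNormSq (pdy f) = 0 := h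
  have hx : EqOn (pdx f) 0 disk := eqOn_zero_of_diskNormSq_eq_zero (hf.pdx (n := 0)).continuous
    (by linarith [diskNormSq_nonneg (pdx f), diskNormSq_nonneg (pdy f)])
  have hy : EqOn (pdy f) 0 disk := eqOn_zero_of_diskNormSq_eq_zero (hf.pdy (n := 0)).continuous
    (by linarith [diskNormSq_nonneg (pdx f), diskNormSq_nonneg (pdy f)])
  have hd : Differentiable ℝ f := hf.differentiable one_ne_zero
  have hconst : EqOn f (fun _ => f 0) disk := fun p hp =>
    convex_disk.is_const_of_fderivWithin_eq_zero hd.differentiableOn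
      (fun q hq => by
        rw [fderivWithin_of_isOpen isOpen_disk hq]
        exact fderiv_eq_zero_of_pdx_pdy (hd q) (hx hq) (hy hq))
      hp zero_mem_disk
  intro p hp
  rw [hconst hp, Pi.zero_apply,
    ← hconst.closure hf.continuous continuous_const one_zero_mem_closure_disk]
  exact hf0 _ (by simp [bdry])

end Vanishing

section Energy

variable {ε R : ℝ} {β : ℂ} {w ψ : ℝ × ℝ → ℂ}

lemma first_energy_identity (hw : ContDiff ℝ ∞ w) (hψ : ContDiff ℝ ∞ ψ)
    (hw0 : ∀ p ∈ bdry, w p = 0)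
    (heq : ∀ p ∈ disk,
      (1 / (R : ℂ)) * lap w p + (R : ℂ) * azim ψ p = β * (w p - (ε : ℂ) * lap w p)) :
    ((R⁻¹ * diskNormSq (lap w) : ℝ) : ℂ) + R * diskInner (azim ψ) (lap w)
      = -β * ((diskGradNormSq w + ε * diskNormSq (lap w) : ℝ) : ℂ) := by
  have hLw : ContDiff ℝ ∞ (lap w) := hw.lap
  have hAψ : ContDiff ℝ ∞ (azim ψ) := hψ.azim
  have hpair := diskInner_congr_left
    (f₁ := (1 / (R : ℂ)) • lap w + (R : ℂ) • azim ψ) (f₂ := β • (w - (ε : ℂ) • lap w)) heq (lap w)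
  rw [diskInner_add_left (by fun_prop) (by fun_prop) hLw.continuous, diskInner_smul_left,
    diskInner_smul_left, diskInner_smul_left,
    diskInner_sub_left hw.continuous (by fun_prop) hLw.continuous, diskInner_smul_left,
    diskInner_self, ← conj_diskInner (lap w) w, diskInner_lap_self (hw.of_le ENat.LEInfty.out) hw0,
    map_neg, conj_ofReal] at hpair
  push_cast
  linear_combination hpair

lemma second_energy_identity (hw : ContDiff ℝ ∞ w) (hψ : ContDiff ℝ ∞ ψ)
    (hψ0 : ∀ p ∈ bdry, ψ p = 0) (hψx : ∀ p ∈ bdry, pdx ψ p = 0)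
    (hψy : ∀ p ∈ bdry, pdy ψ p = 0)
    (heq : ∀ p ∈ disk,
      (1 / (R : ℂ)) * lap (lap ψ) p - (ε : ℂ) * (R : ℂ) * lap (azim w) p
        = β * (lap ψ p - (ε : ℂ) * lap (lap ψ) p)) :
    ((R⁻¹ * diskNormSq (lap ψ) : ℝ) : ℂ) + ((ε * R : ℝ) : ℂ) * conj (diskInner (azim ψ) (lap w))
      = -β * ((diskGradNormSq ψ + ε * diskNormSq (lap ψ) : ℝ) : ℂ) := by
  have hLψ : ContDiff ℝ ∞ (lap ψ) := hψ.lap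
  have hLw : ContDiff ℝ ∞ (lap w) := hw.lap
  have hLLψ : ContDiff ℝ ∞ (lap (lap ψ)) := hLψ.lap
  have hLAw : ContDiff ℝ ∞ (lap (azim w)) := (hw.azim (n := ∞)).lap
  have hpair := diskInner_congr_left
    (f₁ := (1 / (R : ℂ)) • lap (lap ψ) - ((ε : ℂ) * R) • lap (azim w))
    (f₂ := β • (lap ψ - (ε : ℂ) • lap (lap ψ))) heq ψ
  rw [diskInner_sub_left (by fun_prop) (by fun_prop) hψ.continuous, diskInner_smul_left,
    diskInner_smul_left, diskInner_smul_left,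
    diskInner_sub_left hLψ.continuous (by fun_prop) hψ.continuous, diskInner_smul_left,
    diskInner_lap_symm (hLψ.of_le ENat.LEInfty.out) (hψ.of_le ENat.LEInfty.out) hψ0 hψx hψy,
    diskInner_self, lap_azim (hw.of_le ENat.LEInfty.out),
    diskInner_azim_left (hLw.of_le ENat.LEInfty.out) (hψ.of_le ENat.LEInfty.out) hψ0,
    ← conj_diskInner (azim ψ), diskInner_lap_self (hψ.of_le ENat.LEInfty.out) hψ0] at hpair
  push_cast
  linear_combination hpair

end Energy

theorem eigenvalues_are_real_general (ε R : ℝ) (hε : 0 < ε) (β : ℂ)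
    (w ψ : ℝ × ℝ → ℂ) (hw : ContDiff ℝ (⊤ : ℕ∞) w) (hψ : ContDiff ℝ (⊤ : ℕ∞) ψ)
    (hnz : ¬ ∀ p ∈ disk, w p = 0 ∧ ψ p = 0)
    (heq1 : ∀ p ∈ disk,
      (1 / (R : ℂ)) * lap w p + (R : ℂ) * azim ψ p = β * (w p - (ε : ℂ) * lap w p))
    (heq2 : ∀ p ∈ disk,
      (1 / (R : ℂ)) * lap (lap ψ) p - (ε : ℂ) * (R : ℂ) * lap (azim w) p
        = β * (lap ψ p - (ε : ℂ) * lap (lap ψ) p))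
    (hbc : ∀ p ∈ bdry, w p = 0 ∧ ψ p = 0 ∧ pdx ψ p = 0 ∧ pdy ψ p = 0) :
    β.im = 0 := by
  by_contra hβ
  have h₁ := first_energy_identity hw hψ (fun p hp => (hbc p hp).1) heq1
  have h₂ := second_energy_identity hw hψ (fun p hp => (hbc p hp).2.1)
    (fun p hp => (hbc p hp).2.2.1) (fun p hp => (hbc p hp).2.2.2) heq2
  have hsum : diskGradNormSq ψ + ε * diskNormSq (lap ψ)
      + ε * (diskGradNormSq w + ε * diskNormSq (lap w)) = 0 := by
    have hi₁ := congrArg Complex.im h₁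
    have hi₂ := congrArg Complex.im h₂
    simp only [add_im, ofReal_im, im_ofReal_mul, conj_im, neg_mul, neg_im, im_mul_ofReal,
      zero_add] at hi₁ hi₂
    refine (mul_eq_zero.1 ?_).resolve_left hβ
    linear_combination ε * hi₁ + hi₂
  have hεψ := mul_nonneg hε.le (diskNormSq_nonneg (lap ψ))
  have hεw := mul_nonneg hε.le (diskGradNormSq_nonneg w)
  have hεεw := mul_nonneg (mul_nonneg hε.le hε.le) (diskNormSq_nonneg (lap w))
  have hgψ : diskGradNormSq ψ = 0 := by linarith [diskGradNormSq_nonneg ψ]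
  have hgw : diskGradNormSq w = 0 :=
    (mul_eq_zero.1 (by linarith : ε * diskGradNormSq w = 0)).resolve_left hε.ne'
  exact hnz fun p hp =>
    ⟨eqOn_zero_of_diskGradNormSq_eq_zero (hw.of_le ENat.LEInfty.out) (fun q hq => (hbc q hq).1)
        hgw hp,
      eqOn_zero_of_diskGradNormSq_eq_zero (hψ.of_le ENat.LEInfty.out) (fun q hq => (hbc q hq).2.1)
        hgψ hp⟩

/-- Every eigenvalue of the linearized second grade Poiseuille problem is real. -/
theorem eigenvalues_are_real (ε R : ℝ) (hε : 0 < ε) (hR : 0 < R) (β : ℂ)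
    (w ψ : ℝ × ℝ → ℂ) (hw : ContDiff ℝ (⊤ : ℕ∞) w) (hψ : ContDiff ℝ (⊤ : ℕ∞) ψ)
    (hnz : ¬ ∀ p ∈ disk, w p = 0 ∧ ψ p = 0)
    (heq1 : ∀ p ∈ disk,
      (1 / (R : ℂ)) * lap w p + (R : ℂ) * azim ψ p = β * (w p - (ε : ℂ) * lap w p))
    (heq2 : ∀ p ∈ disk,
      (1 / (R : ℂ)) * lap (lap ψ) p - (ε : ℂ) * (R : ℂ) * lap (azim w) p
        = β * (lap ψ p - (ε : ℂ) * lap (lap ψ) p))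
    (hbc : ∀ p ∈ bdry, w p = 0 ∧ ψ p = 0 ∧ pdx ψ p = 0 ∧ pdy ψ p = 0) :
    β.im = 0 :=
  eigenvalues_are_real_general ε R hε β w ψ hw hψ hnz heq1 heq2 hbc
end
end

section
/- Let m be a nonzero integer, ε ≥ 0, R > 0, and β ∈ ℝ with c := 1/R + ε·β ≠ 0. Let w, ψ : (0,1) → ℂ be smooth functions satisfying on (0,1) the system (1/R + β·ε)·Δ_m w + i·m·R·ψ = β·w and −(1/R + β·ε)·Δ_m(Δ_m ψ) + i·ε·m·R·Δ_m w = −β·Δ_m ψ. Define λ = (√ε·m·R − β)/c and μ = (−√ε·m·R − β)/c. Then w satisfies the sixth order equation (Δ_m + λ)(Δ_m + μ)(Δ_m w) = 0 on (0,1). -/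
/-!
Applying `Δ_m` once and twice to the first equation expresses `i m R Δ_m ψ` and `i m R Δ_m² ψ`
through `Δ_m w`, `Δ_m² w`, `Δ_m³ w`. Multiplying the second equation by `i m R` and substituting
eliminates `ψ` and leaves `c² Δ_m³ w - 2βc Δ_m² w + (β² - ε m² R²) Δ_m w = 0`, where
`c = 1/R + εβ`; the polynomial `c² t² - 2βc t + β² - ε m² R²` factors as `c² (t + λ) (t + μ)`.
-/

open Complex

noncomputable section

def besselOp (m : ℤ) (u : ℝ → ℂ) : ℝ → ℂ :=
  fun r => deriv (deriv u) r + deriv u r / (r : ℂ) - (m : ℂ) ^ 2 * u r / (r : ℂ) ^ 2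

open Filter Set Topology

section BesselOp

variable {m : ℤ} {s : Set ℝ} {f g h u : ℝ → ℂ}

theorem besselOp_congr_of_eventuallyEq {r : ℝ} (hfg : f =ᶠ[𝓝 r] g) :
    besselOp m f r = besselOp m g r := by
  simp only [besselOp, hfg.eq_of_nhds, hfg.deriv.eq_of_nhds, hfg.deriv.deriv.eq_of_nhds]

theorem besselOp_eqOn (hs : IsOpen s) (hfg : EqOn f g s) : EqOn (besselOp m f) (besselOp m g) s :=
  fun _ hr => besselOp_congr_of_eventuallyEq (hfg.eventuallyEq_of_mem (hs.mem_nhds hr))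

theorem besselOp_const_mul (a : ℂ) (f : ℝ → ℂ) :
    besselOp m (fun r => a * f r) = fun r => a * besselOp m f r := by
  funext r
  simp only [besselOp, deriv_const_mul_field']
  ring

theorem besselOp_add (hs : IsOpen s) (hf : ContDiffOn ℝ 2 f s) (hg : ContDiffOn ℝ 2 g s) :
    EqOn (besselOp m fun r => f r + g r) (fun r => besselOp m f r + besselOp m g r) s := by
  intro r hr
  have hdiff {v : ℝ → ℂ} (hv : ContDiffOn ℝ 2 v s) :
      ∀ t ∈ s, DifferentiableAt ℝ v t ∧ DifferentiableAt ℝ (deriv v) t := fun t ht =>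
    ⟨(hv.differentiableOn two_ne_zero).differentiableAt (hs.mem_nhds ht),
      ((hv.deriv_of_isOpen hs (by norm_num : (1 : WithTop ℕ∞) + 1 ≤ 2)).differentiableOn
        one_ne_zero).differentiableAt (hs.mem_nhds ht)⟩
  have hderiv : deriv (fun t => f t + g t) =ᶠ[𝓝 r] fun t => deriv f t + deriv g t :=
    eventually_of_mem (hs.mem_nhds hr) fun t ht => deriv_fun_add (hdiff hf t ht).1 (hdiff hg t ht).1
  simp only [besselOp, hderiv.deriv_eq, hderiv.eq_of_nhds,
    deriv_fun_add (hdiff hf r hr).2 (hdiff hg r hr).2]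
  ring

theorem ContDiffOn.besselOp {n : WithTop ℕ∞} (hs : IsOpen s) (h0 : (0 : ℝ) ∉ s)
    (hu : ContDiffOn ℝ (n + 2) u s) : ContDiffOn ℝ n (besselOp m u) s := by
  have hu' : ContDiffOn ℝ (n + 1) (deriv u) s := hu.deriv_of_isOpen hs (by rw [add_assoc]; rfl)
  have hu'' : ContDiffOn ℝ n (deriv (deriv u)) s := hu'.deriv_of_isOpen hs le_rfl
  have hinv : ContDiffOn ℝ n (fun r : ℝ => ((r⁻¹ : ℝ) : ℂ)) s :=
    ofRealCLM.contDiff.comp_contDiffOn (contDiffOn_id.inv fun r hr => ne_of_mem_of_not_mem hr h0)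
  have hform : _root_.besselOp m u = fun r =>
      deriv (deriv u) r + deriv u r * ((r⁻¹ : ℝ) : ℂ) - (m : ℂ) ^ 2 * u r * ((r⁻¹ : ℝ) : ℂ) ^ 2 := by
    funext r
    simp only [_root_.besselOp, ofReal_inv]
    ring
  rw [hform]
  exact (hu''.add ((hu'.of_le le_self_add).mul hinv)).sub
    ((contDiffOn_const.mul (hu.of_le le_self_add)).mul (hinv.pow 2))

theorem EqOn.besselOp_linear (hs : IsOpen s) (hf : ContDiffOn ℝ 2 f s) (hg : ContDiffOn ℝ 2 g s)
    {a b c : ℂ} (hfgh : EqOn (fun r => a * f r + b * g r) (fun r => c * h r) s) :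
    EqOn (fun r => a * besselOp m f r + b * besselOp m g r) (fun r => c * besselOp m h r) s := by
  intro r hr
  have hΔ := besselOp_eqOn (m := m) hs hfgh hr
  rwa [besselOp_add hs (contDiffOn_const.mul hf) (contDiffOn_const.mul hg) hr,
    besselOp_const_mul, besselOp_const_mul, besselOp_const_mul] at hΔ

end BesselOp

theorem factored_quadratic_of_roots {a β c l u X Y Z : ℂ} (hc : c ≠ 0) (hl : l * c = a - β)
    (hu : u * c = -a - β) (h : c ^ 2 * Z - 2 * β * c * Y + (β ^ 2 - a ^ 2) * X = 0) :
    Z + u * Y + l * (Y + u * X) = 0 := by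
  apply mul_left_cancel₀ (pow_ne_zero 2 hc)
  linear_combination h + c * Y * (hl + hu) + X * (c * l * hu - (a + β) * hl)

theorem sixth_order_factorization_general (m : ℤ) (ε R β : ℝ)
    (hε : 0 ≤ ε) (hc : 1 / R + ε * β ≠ 0)
    (lam mu : ℝ)
    (hlam : lam = (Real.sqrt ε * m * R - β) / (1 / R + ε * β))
    (hmu : mu = (-(Real.sqrt ε * m * R) - β) / (1 / R + ε * β))
    (w ψ : ℝ → ℂ)
    (hw : ContDiffOn ℝ (⊤ : ℕ∞) w (Set.Ioo 0 1))
    (hψ : ContDiffOn ℝ (⊤ : ℕ∞) ψ (Set.Ioo 0 1))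
    (heq1 : ∀ r ∈ Set.Ioo (0 : ℝ) 1,
      ((1 / R + β * ε : ℝ) : ℂ) * besselOp m w r + Complex.I * (m : ℂ) * (R : ℂ) * ψ r
        = (β : ℂ) * w r)
    (heq2 : ∀ r ∈ Set.Ioo (0 : ℝ) 1,
      -((1 / R + β * ε : ℝ) : ℂ) * besselOp m (besselOp m ψ) r
        + Complex.I * (ε : ℂ) * (m : ℂ) * (R : ℂ) * besselOp m w r
        = -(β : ℂ) * besselOp m ψ r) :
    ∀ r ∈ Set.Ioo (0 : ℝ) 1,
      besselOp m (fun s => besselOp m (besselOp m w) s + (mu : ℂ) * besselOp m w s) r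
        + (lam : ℂ) * (besselOp m (besselOp m w) r + (mu : ℂ) * besselOp m w r) = 0 := by
  intro r hr
  have hS : IsOpen (Ioo (0 : ℝ) 1) := isOpen_Ioo
  have h0 : (0 : ℝ) ∉ Ioo (0 : ℝ) 1 := fun h => lt_irrefl 0 h.1
  have C2 {v : ℝ → ℂ} (hv : ContDiffOn ℝ (⊤ : ℕ∞) v (Ioo 0 1)) : ContDiffOn ℝ 2 v (Ioo 0 1) :=
    hv.of_le ENat.LEInfty.out
  have hw1 : ContDiffOn ℝ (⊤ : ℕ∞) (besselOp m w) (Ioo 0 1) := hw.besselOp hS h0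
  have hw2 : ContDiffOn ℝ (⊤ : ℕ∞) (besselOp m (besselOp m w)) (Ioo 0 1) := hw1.besselOp hS h0
  have hψ1 : ContDiffOn ℝ (⊤ : ℕ∞) (besselOp m ψ) (Ioo 0 1) := hψ.besselOp hS h0
  have hΔ1 := EqOn.besselOp_linear (m := m) hS (C2 hw1) (C2 hψ) heq1
  have hΔ2 := EqOn.besselOp_linear (m := m) hS (C2 hw2) (C2 hψ1) hΔ1
  set c : ℝ := 1 / R + β * ε with hc_def
  have hsixth : (c : ℂ) ^ 2 * besselOp m (besselOp m (besselOp m w)) r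
      - 2 * β * c * besselOp m (besselOp m w) r
      + (β ^ 2 - (Real.sqrt ε * m * R) ^ 2) * besselOp m w r = 0 := by
    have hsqrt : ((Real.sqrt ε : ℝ) : ℂ) ^ 2 = ε := by exact_mod_cast Real.sq_sqrt hε
    linear_combination I * m * R * heq2 r hr + c * hΔ2 hr - β * hΔ1 hr
      - ε * m ^ 2 * R ^ 2 * besselOp m w r * I_sq - m ^ 2 * R ^ 2 * besselOp m w r * hsqrt
  have hlam_c : (lam : ℂ) * c = Real.sqrt ε * m * R - β := by
    exact_mod_cast show lam * c = _ by rw [hlam, hc_def, mul_comm β ε, div_mul_cancel₀ _ hc]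
  have hmu_c : (mu : ℂ) * c = -(Real.sqrt ε * m * R) - β := by
    exact_mod_cast show mu * c = _ by rw [hmu, hc_def, mul_comm β ε, div_mul_cancel₀ _ hc]
  rw [besselOp_add hS (C2 hw2) (contDiffOn_const.mul (C2 hw1)) hr, besselOp_const_mul]
  exact factored_quadratic_of_roots (ofReal_ne_zero.mpr (by rwa [hc_def, mul_comm β])) hlam_c hmu_c
    hsixth

/-- Eliminating ψ from the separated eigenvalue problem yields the factorized
sixth order equation `(Δ_m + λ)(Δ_m + μ)(Δ_m w) = 0`. -/
theorem sixth_order_factorization (m : ℤ) (hm : m ≠ 0) (ε R β : ℝ)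
    (hε : 0 ≤ ε) (hR : 0 < R) (hc : 1 / R + ε * β ≠ 0)
    (lam mu : ℝ)
    (hlam : lam = (Real.sqrt ε * m * R - β) / (1 / R + ε * β))
    (hmu : mu = (-(Real.sqrt ε * m * R) - β) / (1 / R + ε * β))
    (w ψ : ℝ → ℂ)
    (hw : ContDiffOn ℝ (⊤ : ℕ∞) w (Set.Ioo 0 1))
    (hψ : ContDiffOn ℝ (⊤ : ℕ∞) ψ (Set.Ioo 0 1))
    (heq1 : ∀ r ∈ Set.Ioo (0 : ℝ) 1,
      ((1 / R + β * ε : ℝ) : ℂ) * besselOp m w r + Complex.I * (m : ℂ) * (R : ℂ) * ψ r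
        = (β : ℂ) * w r)
    (heq2 : ∀ r ∈ Set.Ioo (0 : ℝ) 1,
      -((1 / R + β * ε : ℝ) : ℂ) * besselOp m (besselOp m ψ) r
        + Complex.I * (ε : ℂ) * (m : ℂ) * (R : ℂ) * besselOp m w r
        = -(β : ℂ) * besselOp m ψ r) :
    ∀ r ∈ Set.Ioo (0 : ℝ) 1,
      besselOp m (fun s => besselOp m (besselOp m w) s + (mu : ℂ) * besselOp m w s) r
        + (lam : ℂ) * (besselOp m (besselOp m w) r + (mu : ℂ) * besselOp m w r) = 0 :=
  sixth_order_factorization_general m ε R β hε hc lam mu hlam hmu w ψ hw hψ heq1 heq2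
end
end

section
/- Let m ≥ 0 be an integer and x > 0 a real number. Then x·J_m(x)·J_{m+1}(i·x) + (i·x)·J_m(i·x)·J_{m+1}(x) = 0 if and only if I_m(x)·J_m'(x) − J_m(x)·I_m'(x) = 0. (Here i·x is the value √μ for μ = −x², so the left-hand side is the dispersion relation √λ·J_m(√λ)·J_{m+1}(√μ) + √μ·J_m(√μ)·J_{m+1}(√λ) = 0 evaluated at β = 0, where λ = x² and μ = −x².) -/
open Complex

noncomputable section

/-- The Bessel function of the first kind of integer order m ≥ 0,
`J_m(z) = Σ_{k≥0} (−1)^k/(k!(k+m)!) (z/2)^{2k+m}`. -/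
def besselJ (m : ℕ) (z : ℂ) : ℂ :=
  ∑' k : ℕ, ((-1 : ℂ) ^ k / ((Nat.factorial k : ℂ) * (Nat.factorial (k + m) : ℂ)))
    * (z / 2) ^ (2 * k + m)

/-- The modified Bessel function of the first kind of integer order m ≥ 0,
`I_m(z) = Σ_{k≥0} 1/(k!(k+m)!) (z/2)^{2k+m}`. -/
def besselI (m : ℕ) (z : ℂ) : ℂ :=
  ∑' k : ℕ, (1 / ((Nat.factorial k : ℂ) * (Nat.factorial (k + m) : ℂ)))
    * (z / 2) ^ (2 * k + m)

/-!
`J_m` and `I_m` are the cases `σ = -1` and `σ = 1` of the series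
`S_{σ,m}(z) = Σ σ^k/(k!(k+m)!) (z/2)^(2k+m)`. Scaling the argument, `S_{σ,m}(cz) = c^m S_{σc²,m}(z)`,
gives `J_m(ix) = i^m I_m(x)`; termwise differentiation gives `z S_{σ,m}' = m S_{σ,m} + σ z S_{σ,m+1}`.
Hence the dispersion expression equals `i^(m+1) x (J_m I_{m+1} + I_m J_{m+1})`, while
`x (I_m J_m' − J_m I_m') = −x (J_m I_{m+1} + I_m J_{m+1})`, and both vanish together since `x ≠ 0`.
-/

def besselTerm (σ : ℂ) (m k : ℕ) (z : ℂ) : ℂ :=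
  σ ^ k / ((Nat.factorial k : ℂ) * (Nat.factorial (k + m) : ℂ)) * (z / 2) ^ (2 * k + m)

def besselSeries (σ : ℂ) (m : ℕ) (z : ℂ) : ℂ := ∑' k : ℕ, besselTerm σ m k z

theorem besselJ_eq_besselSeries (m : ℕ) : besselJ m = besselSeries (-1) m := rfl

theorem besselI_eq_besselSeries (m : ℕ) : besselI m = besselSeries 1 m := by
  ext z
  simp only [besselI, besselSeries, besselTerm, one_pow]

theorem norm_besselTerm_le (σ : ℂ) (m k : ℕ) (z : ℂ) :
    ‖besselTerm σ m k z‖ ≤ ‖z / 2‖ ^ m * ((‖σ‖ * ‖z / 2‖ ^ 2) ^ k / k.factorial) := by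
  have hk : (0 : ℝ) < k.factorial := by positivity
  have hkm : (1 : ℝ) ≤ (k + m).factorial := by exact_mod_cast (k + m).factorial_pos
  have hcoef : ‖σ‖ ^ k / (k.factorial * (k + m).factorial) ≤ ‖σ‖ ^ k / k.factorial :=
    div_le_div_of_nonneg_left (by positivity) hk (le_mul_of_one_le_right hk.le hkm)
  calc ‖besselTerm σ m k z‖
      = ‖σ‖ ^ k / (k.factorial * (k + m).factorial) * ‖z / 2‖ ^ (2 * k + m) := by
        simp [besselTerm]
    _ ≤ ‖σ‖ ^ k / k.factorial * ‖z / 2‖ ^ (2 * k + m) := by gcongr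
    _ = ‖z / 2‖ ^ m * ((‖σ‖ * ‖z / 2‖ ^ 2) ^ k / k.factorial) := by ring

theorem summable_besselTerm (σ : ℂ) (m : ℕ) (z : ℂ) : Summable (besselTerm σ m · z) :=
  .of_norm_bounded ((Real.summable_pow_div_factorial _).mul_left _) (norm_besselTerm_le σ m · z)

theorem hasSum_besselSeries (σ : ℂ) (m : ℕ) (z : ℂ) :
    HasSum (besselTerm σ m · z) (besselSeries σ m z) :=
  (summable_besselTerm σ m z).hasSum

theorem besselTerm_mul (σ c : ℂ) (m k : ℕ) (z : ℂ) :
    besselTerm σ m k (c * z) = c ^ m * besselTerm (σ * c ^ 2) m k z := by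
  simp only [besselTerm, mul_div_assoc, mul_pow, pow_add, pow_mul]
  ring

theorem besselSeries_mul (σ c : ℂ) (m : ℕ) (z : ℂ) :
    besselSeries σ m (c * z) = c ^ m * besselSeries (σ * c ^ 2) m z := by
  simp only [besselSeries, besselTerm_mul, tsum_mul_left]

theorem besselJ_I_mul (m : ℕ) (z : ℂ) : besselJ m (I * z) = I ^ m * besselI m z := by
  rw [besselJ_eq_besselSeries, besselSeries_mul, besselI_eq_besselSeries, I_sq, neg_one_mul, neg_neg]

theorem mul_deriv_besselTerm (σ : ℂ) (m k : ℕ) (z : ℂ) :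
    z * deriv (besselTerm σ m k) z = (2 * k + m) * besselTerm σ m k z := by
  have hderiv : HasDerivAt (besselTerm σ m k)
      (σ ^ k / ((Nat.factorial k : ℂ) * (Nat.factorial (k + m) : ℂ)) *
        ((2 * k + m : ℕ) * (z / 2) ^ (2 * k + m - 1) * (1 / 2))) z :=
    (((hasDerivAt_id z).div_const 2).pow _).const_mul _
  rw [hderiv.deriv, besselTerm]
  rcases Nat.eq_zero_or_pos (2 * k + m) with h | h
  · obtain ⟨rfl, rfl⟩ : k = 0 ∧ m = 0 := by omega
    simp
  · obtain ⟨n, hn⟩ : ∃ n, 2 * k + m = n + 1 := ⟨_, (Nat.succ_pred_eq_of_pos h).symm⟩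
    have hcast : (2 * k + m : ℂ) = n + 1 := by exact_mod_cast hn
    rw [show 2 * k + m - 1 = n by omega, hn, pow_succ, hcast]
    push_cast
    ring

theorem besselTerm_succ (σ : ℂ) (m j : ℕ) (z : ℂ) :
    2 * ((j + 1 : ℕ) : ℂ) * besselTerm σ m (j + 1) z = σ * z * besselTerm σ (m + 1) j z := by
  have hj : ((j : ℂ) + 1) ≠ 0 := Nat.cast_add_one_ne_zero j
  simp only [besselTerm, Nat.factorial_succ, show j + 1 + m = j + (m + 1) by omega,
    show 2 * (j + 1) + m = 2 * j + (m + 1) + 1 by omega]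
  push_cast
  field_simp
  ring

theorem hasSum_deriv_besselTerm (σ : ℂ) (m : ℕ) (z : ℂ) :
    HasSum (fun k => deriv (besselTerm σ m k) z) (deriv (besselSeries σ m) z) := by
  -- Weierstrass: for holomorphic terms, a summable bound on the terms themselves over a ball suffices.
  have hbound (k : ℕ) (w : ℂ) (hw : w ∈ Metric.ball 0 (‖z‖ + 1)) :
      ‖besselTerm σ m k w‖ ≤ (‖z‖ + 1) ^ m * ((‖σ‖ * (‖z‖ + 1) ^ 2) ^ k / k.factorial) := by
    have hw2 : ‖w / 2‖ ≤ ‖z‖ + 1 := by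
      rw [mem_ball_zero_iff] at hw
      rw [norm_div, Complex.norm_two]
      linarith [norm_nonneg w]
    refine (norm_besselTerm_le σ m k w).trans ?_
    gcongr
  exact hasSum_deriv_of_summable_norm ((Real.summable_pow_div_factorial _).mul_left _)
    (fun k => by unfold besselTerm; fun_prop) Metric.isOpen_ball hbound
    (mem_ball_zero_iff.mpr (lt_add_one _))

theorem mul_deriv_besselSeries (σ : ℂ) (m : ℕ) (z : ℂ) :
    z * deriv (besselSeries σ m) z = m * besselSeries σ m z + σ * z * besselSeries σ (m + 1) z := by
  have hshift : HasSum (fun k : ℕ => 2 * (k : ℂ) * besselTerm σ m k z)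
      (σ * z * besselSeries σ (m + 1) z) := by
    have h := (hasSum_besselSeries σ (m + 1) z).mul_left (σ * z)
    simp only [← besselTerm_succ] at h
    simpa using (hasSum_nat_add_iff (f := fun k : ℕ => 2 * (k : ℂ) * besselTerm σ m k z) 1).mp h
  have hsum : HasSum (fun k => z * deriv (besselTerm σ m k) z)
      (m * besselSeries σ m z + σ * z * besselSeries σ (m + 1) z) := by
    have hterm (k : ℕ) : z * deriv (besselTerm σ m k) z
        = m * besselTerm σ m k z + 2 * (k : ℂ) * besselTerm σ m k z := by
      rw [mul_deriv_besselTerm]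
      ring
    simpa only [hterm] using ((hasSum_besselSeries σ m z).mul_left (m : ℂ)).add hshift
  exact ((hasSum_deriv_besselTerm σ m z).mul_left z).unique hsum

theorem mul_deriv_besselJ (m : ℕ) (z : ℂ) :
    z * deriv (besselJ m) z = m * besselJ m z - z * besselJ (m + 1) z := by
  simp only [besselJ_eq_besselSeries, mul_deriv_besselSeries]
  ring

theorem mul_deriv_besselI (m : ℕ) (z : ℂ) :
    z * deriv (besselI m) z = m * besselI m z + z * besselI (m + 1) z := by
  simp only [besselI_eq_besselSeries, mul_deriv_besselSeries]
  ring

/-- At criticality (β = 0, λ = x², μ = −x²) the dispersion relation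
`√λ J_m(√λ) J_{m+1}(√μ) + √μ J_m(√μ) J_{m+1}(√λ) = 0` is equivalent to the
cross-product equation `I_m(x)J_m'(x) − J_m(x)I_m'(x) = 0`. -/
theorem dispersion_relation_at_criticality (m : ℕ) (x : ℝ) (hx : 0 < x) :
    ((x : ℂ) * besselJ m (x : ℂ) * besselJ (m + 1) (Complex.I * (x : ℂ))
        + (Complex.I * (x : ℂ)) * besselJ m (Complex.I * (x : ℂ)) * besselJ (m + 1) (x : ℂ) = 0)
      ↔ (besselI m (x : ℂ) * deriv (besselJ m) (x : ℂ)
          - besselJ m (x : ℂ) * deriv (besselI m) (x : ℂ) = 0) := by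
  have hx0 : (x : ℂ) ≠ 0 := ofReal_ne_zero.mpr hx.ne'
  set S := besselJ m x * besselI (m + 1) x + besselI m x * besselJ (m + 1) x
  have hcross : (x : ℂ) * (besselI m x * deriv (besselJ m) x - besselJ m x * deriv (besselI m) x)
      = -x * S := by
    linear_combination besselI m x * mul_deriv_besselJ m x - besselJ m x * mul_deriv_besselI m x
  rw [besselJ_I_mul, besselJ_I_mul]
  calc _ ↔ I ^ (m + 1) * x * S = 0 := by simp only [S]; ring_nf
    _ ↔ S = 0 := by simp [hx0]
    _ ↔ (x : ℂ) * (besselI m x * deriv (besselJ m) x - besselJ m x * deriv (besselI m) x) = 0 := by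
      rw [hcross]; simp [hx0]
    _ ↔ _ := by simp [hx0]
end
end

section
/- Let (λ_m)_{m≥1} be positive real numbers such that for every integer m ≥ 1 the two-sided bound 2⁴·(m+1)(m+2)(m+3)·√((m+4)(m+5)) / √(5m+15) < λ_m² < 2⁴·(m+1)(m+2)(m+3)(m+4)(m+5) / (5m+17) holds. Then for every integer m ≥ 7, λ_3/3 < λ_m/m (equivalently √(λ_3/3) < √(λ_m/m)). -/
noncomputable section

/-- From the two-sided bound on λ_{m,1}² it follows that λ_3/3 < λ_m/m for all
m ≥ 7, hence the critical Reynolds number is attained at some m ≤ 6. -/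
theorem lambda_ratio_min_below_seven (lam : ℕ → ℝ)
    (hpos : ∀ m : ℕ, 1 ≤ m → 0 < lam m)
    (hlb : ∀ m : ℕ, 1 ≤ m →
      2 ^ 4 * ((m : ℝ) + 1) * ((m : ℝ) + 2) * ((m : ℝ) + 3)
          * Real.sqrt (((m : ℝ) + 4) * ((m : ℝ) + 5)) / Real.sqrt (5 * (m : ℝ) + 15)
        < (lam m) ^ 2)
    (hub : ∀ m : ℕ, 1 ≤ m →
      (lam m) ^ 2 < 2 ^ 4 * ((m : ℝ) + 1) * ((m : ℝ) + 2) * ((m : ℝ) + 3)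
          * ((m : ℝ) + 4) * ((m : ℝ) + 5) / (5 * (m : ℝ) + 17)) :
    ∀ m : ℕ, 7 ≤ m → lam 3 / 3 < lam m / (m : ℝ) := by
  intro m hm
  set x : ℝ := (m : ℝ) with hxdef
  have hx : (7 : ℝ) ≤ x := by rw [hxdef]; exact_mod_cast hm
  have hxpos : 0 < x := by linarith
  have hm1 : 1 ≤ m := le_trans (by norm_num) hm
  have hlam3 : 0 < lam 3 := hpos 3 (by norm_num)
  have hlamm : 0 < lam m := hpos m hm1
  -- upper bound for lam 3
  have h3 : (lam 3) ^ 2 < 3360 := by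
    have := hub 3 (by norm_num)
    norm_num at this
    linarith
  -- lower bound for lam m
  have hA : (0:ℝ) < 2 ^ 4 * (x + 1) * (x + 2) * (x + 3) := by
    have h1 : (0:ℝ) < x + 1 := by linarith
    have h2 : (0:ℝ) < x + 2 := by linarith
    have h3 : (0:ℝ) < x + 3 := by linarith
    positivity
  have hq : (0:ℝ) < 5 * x + 15 := by linarith
  -- the sqrt term
  have hsq : 3360 * x ^ 2 / (9 * (2 ^ 4 * (x + 1) * (x + 2) * (x + 3)))
      < Real.sqrt (((x + 4) * (x + 5)) / (5 * x + 15)) := by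
    rw [show (9 : ℝ) * (2 ^ 4 * (x + 1) * (x + 2) * (x + 3))
        = 144 * (x + 1) * (x + 2) * (x + 3) by ring]
    have hc : (0:ℝ) ≤ 3360 * x ^ 2 / (144 * (x + 1) * (x + 2) * (x + 3)) := by
      positivity
    rw [Real.lt_sqrt hc]
    rw [div_pow, div_lt_div_iff₀ (by positivity) hq]
    have key : (3360 * x ^ 2) ^ 2 * (5 * x + 15)
        < (x + 4) * (x + 5) * (144 * (x + 1) * (x + 2) * (x + 3)) ^ 2 := by
      nlinarith [sq_nonneg (x - 7), sq_nonneg x, sq_nonneg (x^2 - 7*x),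
        sq_nonneg (x^3 - 7*x^2), mul_pos hxpos hxpos,
        mul_nonneg (mul_nonneg (sq_nonneg (x-7)) hxpos.le) hxpos.le,
        mul_nonneg (mul_nonneg (mul_nonneg (sq_nonneg (x-7)) hxpos.le) hxpos.le) hxpos.le,
        mul_nonneg (mul_nonneg (mul_nonneg (mul_nonneg (sq_nonneg (x-7)) hxpos.le) hxpos.le) hxpos.le) hxpos.le]
    linarith
  have hmlb : 3360 * x ^ 2 / 9 < (lam m) ^ 2 := by
    have h1 := hlb m hm1
    rw [← hxdef] at h1
    have heq : 2 ^ 4 * (x + 1) * (x + 2) * (x + 3) * Real.sqrt ((x + 4) * (x + 5))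
        / Real.sqrt (5 * x + 15)
        = 2 ^ 4 * (x + 1) * (x + 2) * (x + 3) * Real.sqrt (((x + 4) * (x + 5)) / (5 * x + 15)) := by
      rw [Real.sqrt_div (by nlinarith)]
      ring
    rw [heq] at h1
    have h2 : 3360 * x ^ 2 / 9
        < 2 ^ 4 * (x + 1) * (x + 2) * (x + 3) * Real.sqrt (((x + 4) * (x + 5)) / (5 * x + 15)) := by
      calc 3360 * x ^ 2 / 9
            = (3360 * x ^ 2 / (9 * (2 ^ 4 * (x + 1) * (x + 2) * (x + 3))))
              * (2 ^ 4 * (x + 1) * (x + 2) * (x + 3)) := by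
              field_simp
          _ < Real.sqrt (((x + 4) * (x + 5)) / (5 * x + 15))
              * (2 ^ 4 * (x + 1) * (x + 2) * (x + 3)) := by
              exact mul_lt_mul_of_pos_right hsq hA
          _ = _ := by ring
    linarith
  -- conclude
  have hdiv3 : (lam 3 / 3) ^ 2 < (lam m / x) ^ 2 := by
    rw [div_pow, div_pow]
    have hx2 : (0:ℝ) < x ^ 2 := by positivity
    rw [div_lt_div_iff₀ (by norm_num) hx2]
    nlinarith [h3, hmlb, hx2]
  have := lt_of_pow_lt_pow_left₀ 2 (by positivity : (0:ℝ) ≤ lam m / x) hdiv3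
  exact this
end
end

section
/- Let β > 0 be real and A ∈ ℂ with Re(A) < 0. Define z : ℝ → ℂ by z(t) = √(−β/Re(A)) · exp( −i·(Im(A)/Re(A))·β·t ). Then z solves the ordinary differential equation z'(t) = β·z(t) + A·|z(t)|²·z(t) for all t ∈ ℝ; moreover, if Im(A) ≠ 0, then z is periodic with period T = 2π·Re(A)/(Im(A)·β). -/
open Complex

noncomputable section

namespace Complex

theorem hasDerivAt_const_mul_cexp_mul_ofReal (c μ : ℂ) (t : ℝ) :
    HasDerivAt (fun s : ℝ => c * exp (μ * s)) (μ * (c * exp (μ * t))) t := by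
  have hlin : HasDerivAt (fun s : ℝ => μ * (s : ℂ)) μ t := by
    simpa using (hasDerivAt_id t).ofReal_comp.const_mul μ
  exact (hlin.cexp.const_mul c).congr_deriv (by ring)

theorem norm_const_mul_cexp_mul_ofReal {μ : ℂ} (hμ : μ.re = 0) (c : ℂ) (t : ℝ) :
    ‖c * exp (μ * t)‖ = ‖c‖ := by
  simp [norm_exp, hμ]

theorem periodic_const_mul_cexp_mul_ofReal {μ : ℂ} {T : ℝ} (hT : exp (μ * T) = 1) (c : ℂ) :
    Function.Periodic (fun s : ℝ => c * exp (μ * s)) T := by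
  intro s
  simp only [ofReal_add, mul_add, exp_add, hT, mul_one]

end Complex

/-- On the circle `|z|² = -β / Re A` the cubic term cancels the growth `β z`, leaving a rotation. -/
theorem linear_add_cubic_coeff_eq_rotation (β : ℝ) {A : ℂ} (hA : A.re ≠ 0) :
    (β : ℂ) + A * ((-β / A.re : ℝ) : ℂ) = -I * ((A.im / A.re : ℝ) : ℂ) * β := by
  apply Complex.ext <;> simp [field]

/-- The explicit bifurcated periodic solution of the reduced equation
`z' = βz + A|z|²z`: for `β > 0` and `Re A < 0`,
`z(t) = √(−β/Re A) exp(−i (Im A/Re A) β t)` solves the ODE, and when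
`Im A ≠ 0` it is periodic with period `T = 2π Re A/(Im A · β)`. -/
theorem bifurcated_periodic_solution (β : ℝ) (hβ : 0 < β) (A : ℂ) (hA : A.re < 0)
    (z : ℝ → ℂ)
    (hz : z = fun t : ℝ => (Real.sqrt (-β / A.re) : ℂ) *
      Complex.exp (-Complex.I * ((A.im / A.re : ℝ) : ℂ) * (β : ℂ) * (t : ℂ))) :
    (∀ t : ℝ, HasDerivAt z ((β : ℂ) * z t + A * (((‖z t‖ : ℝ) : ℂ)) ^ 2 * z t) t)
    ∧ (A.im ≠ 0 → Function.Periodic z (2 * Real.pi * A.re / (A.im * β))) := by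
  set μ : ℂ := -I * ((A.im / A.re : ℝ) : ℂ) * β with hμ
  have hμre : μ.re = 0 := by simp [hμ]
  have hamp : 0 ≤ -β / A.re := div_nonneg_of_nonpos (by linarith) hA.le
  subst hz
  refine ⟨fun t => ?_, fun him => ?_⟩
  · have hnorm_sq : ((‖(Real.sqrt (-β / A.re) : ℂ) * exp (μ * t)‖ : ℝ) : ℂ) ^ 2
        = ((-β / A.re : ℝ) : ℂ) := by
      rw [norm_const_mul_cexp_mul_ofReal hμre, norm_real, Real.norm_of_nonneg (Real.sqrt_nonneg _),
        ← ofReal_pow, Real.sq_sqrt hamp]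
    rw [hnorm_sq, ← add_mul, linear_add_cubic_coeff_eq_rotation β hA.ne]
    exact hasDerivAt_const_mul_cexp_mul_ofReal _ μ t
  · have hturn : μ * ((2 * Real.pi * A.re / (A.im * β) : ℝ) : ℂ) = -(2 * Real.pi * I) := by
      have : (A.re : ℂ) ≠ 0 := mod_cast hA.ne
      have : (A.im : ℂ) ≠ 0 := mod_cast him
      have : (β : ℂ) ≠ 0 := mod_cast hβ.ne'
      rw [hμ]
      push_cast
      field_simp
    exact periodic_const_mul_cexp_mul_ofReal (by rw [hturn, exp_neg, exp_two_pi_mul_I, inv_one]) _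
end
end
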